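/- arXiv:2503.22784 — 7 statements merged into one kernel-verified Lean document; each statement's English description precedes it below -/
import Mathlib

section
/- Let h(x) = x^a with real a ≥ 2 and m, μ > 0. If μ/m < (a−1)^(a−1)/a^a, then the equation m·p^a·(1−p) = μ·p has exactly two solutions 0 < p₀ < p₁ < 1 besides p = 0. -/
open Real

private lemma g_deriv (a : ℝ) (ha : 2 ≤ a) {x : ℝ} (hx : 0 < x) :
    HasDerivAt (fun p : ℝ => p ^ (a - 1) * (1 - p)) (x ^ (a - 1 - 1) * ((a - 1) - a * x)) x := by
  have h1 : HasDerivAt (fun p : ℝ => p ^ (a - 1)) ((a - 1) * x ^ (a - 1 - 1)) x :=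
    Real.hasDerivAt_rpow_const (Or.inl hx.ne')
  have h2 : HasDerivAt (fun p : ℝ => 1 - p) (-1) x := by
    simpa using (hasDerivAt_id x).const_sub 1
  have h := h1.mul h2
  have hxb : x ^ (a - 1) = x ^ (a - 1 - 1) * x := by
    nth_rewrite 1 [show a - 1 = (a - 1 - 1) + 1 by ring]
    rw [Real.rpow_add hx, Real.rpow_one]
  have heq : (a - 1) * x ^ (a - 1 - 1) * (1 - x) + x ^ (a - 1) * (-1)
      = x ^ (a - 1 - 1) * ((a - 1) - a * x) := by rw [hxb]; ring
  exact heq ▸ h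

private lemma g_cont (a : ℝ) (ha : 2 ≤ a) :
    Continuous (fun p : ℝ => p ^ (a - 1) * (1 - p)) := by
  apply Continuous.mul _ (by continuity)
  rw [continuous_iff_continuousAt]
  intro x
  exact Real.continuousAt_rpow_const x (a - 1) (Or.inr (by linarith))

/-- With `h(x) = x^a` for real `a ≥ 2` and `m, μ > 0`: if `μ/m < (a−1)^(a−1)/a^a`,
the equation `m·p^a·(1−p) = μ·p` has exactly two solutions `0 < p₀ < p₁ < 1`
besides `p = 0`. -/
theorem two_nontrivial_equilibria (a m μ : ℝ) (ha : 2 ≤ a) (hm : 0 < m) (hμ : 0 < μ)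
    (hcond : μ / m < (a - 1) ^ (a - 1) / a ^ a) :
    ∃ p₀ p₁ : ℝ, 0 < p₀ ∧ p₀ < p₁ ∧ p₁ < 1 ∧
      m * p₀ ^ a * (1 - p₀) = μ * p₀ ∧
      m * p₁ ^ a * (1 - p₁) = μ * p₁ ∧
      ∀ p : ℝ, 0 < p → p < 1 → m * p ^ a * (1 - p) = μ * p → p = p₀ ∨ p = p₁ := by
  set b : ℝ := a - 1 with hb_def
  have hb1 : 1 ≤ b := by simp [hb_def]; linarith
  have hb0 : 0 < b := by linarith
  have ha0 : 0 < a := by linarith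
  set g : ℝ → ℝ := fun p => p ^ b * (1 - p) with hg_def
  set q : ℝ := b / a with hq_def
  have hq0 : 0 < q := div_pos hb0 ha0
  have hq1 : q < 1 := (div_lt_one ha0).mpr (by linarith)
  -- value at peak
  have hgq : g q = b ^ b / a ^ a := by
    have h1 : (1 : ℝ) - q = 1 / a := by
      rw [hq_def, hb_def]; field_simp; ring
    have h2 : q ^ b = b ^ b / a ^ b := by
      rw [hq_def]; exact Real.div_rpow hb0.le ha0.le b
    have h3 : a ^ b * a = a ^ a := by
      calc a ^ b * a = a ^ b * a ^ (1:ℝ) := by rw [Real.rpow_one]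
        _ = a ^ (b + 1) := (Real.rpow_add ha0 b 1).symm
        _ = a ^ a := by congr 1; rw [hb_def]; ring
    simp only [hg_def, h1, h2]
    rw [div_mul_div_comm, mul_one, h3]
  set c : ℝ := μ / m with hc_def
  have hc0 : 0 < c := div_pos hμ hm
  have hcq : c < g q := by rw [hgq]; exact hcond
  -- equation equivalence
  have key : ∀ p : ℝ, 0 < p → (m * p ^ a * (1 - p) = μ * p ↔ g p = c) := by
    intro p hp
    have hpa : p ^ a = p ^ b * p := by
      rw [show a = b + 1 by simp [hb_def], Real.rpow_add hp, Real.rpow_one]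
    simp only [hg_def, hc_def]
    rw [hpa, eq_div_iff hm.ne']
    constructor
    · intro h
      exact mul_right_cancel₀ hp.ne' (by linear_combination h)
    · intro h
      linear_combination p * h
  -- continuity and monotonicity
  have hcont : Continuous g := g_cont a ha
  have hmono : StrictMonoOn g (Set.Icc 0 q) := by
    apply strictMonoOn_of_deriv_pos (convex_Icc 0 q) hcont.continuousOn
    intro x hx
    rw [interior_Icc] at hx
    rw [(g_deriv a ha hx.1).deriv]
    have h1 : 0 < x ^ (b - 1) := Real.rpow_pos_of_pos hx.1 _
    have h2 : 0 < b - a * x := by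
      have : a * x < a * q := by exact mul_lt_mul_of_pos_left hx.2 ha0
      rw [hq_def, mul_div_cancel₀ _ ha0.ne'] at this
      linarith
    exact mul_pos h1 h2
  have hanti : StrictAntiOn g (Set.Icc q 1) := by
    apply strictAntiOn_of_deriv_neg (convex_Icc q 1) hcont.continuousOn
    intro x hx
    rw [interior_Icc] at hx
    have hx0 : 0 < x := lt_trans hq0 hx.1
    rw [(g_deriv a ha hx0).deriv]
    have h1 : 0 < x ^ (b - 1) := Real.rpow_pos_of_pos hx0 _
    have h2 : b - a * x < 0 := by
      have : a * q < a * x := mul_lt_mul_of_pos_left hx.1 ha0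
      rw [hq_def, mul_div_cancel₀ _ ha0.ne'] at this
      linarith
    exact mul_neg_of_pos_of_neg h1 h2
  have hg0 : g 0 = 0 := by
    simp [hg_def, Real.zero_rpow hb0.ne']
  have hg1 : g 1 = 0 := by simp [hg_def]
  -- existence via IVT
  obtain ⟨p₀, hp₀mem, hp₀⟩ : ∃ p₀ ∈ Set.Ioo (0:ℝ) q, g p₀ = c := by
    have := intermediate_value_Ioo hq0.le hcont.continuousOn
      (a := (0:ℝ)) (b := q) (f := g)
    have hc : c ∈ Set.Ioo (g 0) (g q) := by rw [hg0]; exact ⟨hc0, hcq⟩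
    obtain ⟨x, hx, hgx⟩ := this hc
    exact ⟨x, hx, hgx⟩
  obtain ⟨p₁, hp₁mem, hp₁⟩ : ∃ p₁ ∈ Set.Ioo q (1:ℝ), g p₁ = c := by
    have := intermediate_value_Ioo' hq1.le hcont.continuousOn
      (a := q) (b := (1:ℝ)) (f := g)
    have hc : c ∈ Set.Ioo (g 1) (g q) := by rw [hg1]; exact ⟨hc0, hcq⟩
    obtain ⟨x, hx, hgx⟩ := this hc
    exact ⟨x, hx, hgx⟩
  refine ⟨p₀, p₁, hp₀mem.1, lt_trans hp₀mem.2 hp₁mem.1, hp₁mem.2, ?_, ?_, ?_⟩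
  · exact (key p₀ hp₀mem.1).mpr hp₀
  · exact (key p₁ (lt_trans hq0 hp₁mem.1)).mpr hp₁
  · intro p hp hp1 heq
    have hgp : g p = c := (key p hp).mp heq
    rcases le_or_gt p q with hle | hlt
    · left
      exact hmono.injOn ⟨hp.le, hle⟩ ⟨hp₀mem.1.le, hp₀mem.2.le⟩ (hgp.trans hp₀.symm)
    · right
      exact hanti.injOn ⟨hlt.le, hp1.le⟩ ⟨hp₁mem.1.le, hp₁mem.2.le⟩ (hgp.trans hp₁.symm)
end

section
/- With h(x) = x^a, a ≥ 2, and μ/m < (a−1)^(a−1)/a^a, the three equilibria 0 < p₀ < p₁ of F(p) = 2m·p^a·(1−p) − 2μ·p satisfy: F'(0) < 0, F'(p₀) > 0, and F'(p₁) < 0; that is, 0 and p₁ are stable and p₀ is unstable. -/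
open Real

/-- With `h(x) = x^a`, `a ≥ 2` (real), and `μ/m < (a−1)^(a−1)/a^a`, the three
equilibria `0 < p₀ < p₁` of `F(p) = 2m·p^a·(1−p) − 2μ·p` satisfy `F'(0) < 0`,
`F'(p₀) > 0` and `F'(p₁) < 0`: the equilibria `0` and `p₁` are stable and `p₀`
is unstable. -/
theorem stability_of_three_equilibria (a m μ p₀ p₁ : ℝ) (ha : 2 ≤ a)
    (hm : 0 < m) (hμ : 0 < μ) (hcond : μ / m < (a - 1) ^ (a - 1) / a ^ a)
    (hp₀ : 0 < p₀) (hp₀₁ : p₀ < p₁) (hp₁ : p₁ < 1)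
    (hroot₀ : p₀ ^ (a - 1) * (1 - p₀) = μ / m)
    (hroot₁ : p₁ ^ (a - 1) * (1 - p₁) = μ / m) :
    deriv (fun p : ℝ => 2 * m * p ^ a * (1 - p) - 2 * μ * p) 0 < 0
    ∧ 0 < deriv (fun p : ℝ => 2 * m * p ^ a * (1 - p) - 2 * μ * p) p₀
    ∧ deriv (fun p : ℝ => 2 * m * p ^ a * (1 - p) - 2 * μ * p) p₁ < 0 := by
  have ha0 : (0:ℝ) < a := by linarith
  have ha1 : (0:ℝ) < a - 1 := by linarith
  set pc : ℝ := (a - 1) / a with hpc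
  have hpc0 : 0 < pc := div_pos ha1 ha0
  have hpc1 : pc < 1 := by
    rw [hpc, div_lt_one ha0]; linarith
  have hapc : a * pc = a - 1 := by
    rw [hpc]; field_simp
  -- derivative of F
  have hF : ∀ x : ℝ, HasDerivAt (fun p : ℝ => 2 * m * p ^ a * (1 - p) - 2 * μ * p)
      (2 * m * (a * x ^ (a - 1)) * (1 - x) + 2 * m * x ^ a * (-1) - 2 * μ) x := by
    intro x
    have h1 : HasDerivAt (fun p : ℝ => p ^ a) (a * x ^ (a - 1)) x :=
      Real.hasDerivAt_rpow_const (Or.inr (by linarith))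
    have h2 : HasDerivAt (fun p : ℝ => 2 * m * p ^ a) (2 * m * (a * x ^ (a - 1))) x :=
      h1.const_mul (2 * m)
    have h3 : HasDerivAt (fun p : ℝ => 1 - p) (-1) x := by
      simpa using (hasDerivAt_id x).const_sub 1
    have h4 : HasDerivAt (fun p : ℝ => 2 * m * p ^ a * (1 - p))
        (2 * m * (a * x ^ (a - 1)) * (1 - x) + 2 * m * x ^ a * (-1)) x := h2.mul h3
    have h5 : HasDerivAt (fun p : ℝ => 2 * μ * p) (2 * μ) x := by
      simpa using (hasDerivAt_id x).const_mul (2 * μ)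
    exact h4.sub h5
  -- derivative of g(p) = p^(a-1) (1-p)
  have hg : ∀ x : ℝ, 0 < x → HasDerivAt (fun p : ℝ => p ^ (a - 1) * (1 - p))
      (x ^ (a - 2) * ((a - 1) - a * x)) x := by
    intro x hx
    have h1 : HasDerivAt (fun p : ℝ => p ^ (a - 1)) ((a - 1) * x ^ (a - 1 - 1)) x :=
      Real.hasDerivAt_rpow_const (Or.inl (ne_of_gt hx))
    have h3 : HasDerivAt (fun p : ℝ => 1 - p) (-1) x := by
      simpa using (hasDerivAt_id x).const_sub 1
    have h4 : HasDerivAt (fun p : ℝ => p ^ (a - 1) * (1 - p))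
        ((a - 1) * x ^ (a - 1 - 1) * (1 - x) + x ^ (a - 1) * (-1)) x := h1.mul h3
    have e1 : a - 1 - 1 = a - 2 := by ring
    have e2 : x ^ (a - 1) = x ^ (a - 2) * x := by
      rw [show a - 1 = a - 2 + 1 by ring, Real.rpow_add hx, Real.rpow_one]
    convert h4 using 1
    rw [e1, e2]; ring
  -- continuity of g
  have hc1 : Continuous (fun p : ℝ => p ^ (a - 1)) :=
    continuous_iff_continuousAt.2 fun x =>
      Real.continuousAt_rpow_const x (a - 1) (Or.inr ha1.le)
  have hc : Continuous (fun p : ℝ => p ^ (a - 1) * (1 - p)) :=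
    hc1.mul (continuous_const.sub continuous_id)
  -- g strictly monotone on [0, pc]
  have hmono : StrictMonoOn (fun p : ℝ => p ^ (a - 1) * (1 - p)) (Set.Icc 0 pc) := by
    apply strictMonoOn_of_deriv_pos (convex_Icc 0 pc) hc.continuousOn
    intro x hx
    rw [interior_Icc] at hx
    rw [(hg x hx.1).deriv]
    have hax : a * x < a - 1 := by
      have := (mul_lt_mul_iff_right₀ ha0).2 hx.2
      rwa [hapc] at this
    have := Real.rpow_pos_of_pos hx.1 (a - 2)
    nlinarith
  -- g strictly antitone on [pc, 1]
  have hanti : StrictAntiOn (fun p : ℝ => p ^ (a - 1) * (1 - p)) (Set.Icc pc 1) := by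
    apply strictAntiOn_of_deriv_neg (convex_Icc pc 1) hc.continuousOn
    intro x hx
    rw [interior_Icc] at hx
    have hx0 : 0 < x := lt_trans hpc0 hx.1
    rw [(hg x hx0).deriv]
    have hax : a - 1 < a * x := by
      have := (mul_lt_mul_iff_right₀ ha0).2 hx.1
      rwa [hapc] at this
    have := Real.rpow_pos_of_pos hx0 (a - 2)
    nlinarith
  -- p₀ < pc < p₁
  have h0c : p₀ < pc := by
    by_contra h
    push_neg at h
    have h1 := hanti (Set.mem_Icc.2 ⟨h, le_of_lt (lt_trans hp₀₁ hp₁)⟩)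
      (Set.mem_Icc.2 ⟨le_trans h (le_of_lt hp₀₁), le_of_lt hp₁⟩) hp₀₁
    have h2 : p₁ ^ (a - 1) * (1 - p₁) < p₀ ^ (a - 1) * (1 - p₀) := h1
    rw [hroot₀, hroot₁] at h2
    exact lt_irrefl _ h2
  have hc1' : pc < p₁ := by
    by_contra h
    push_neg at h
    have h1 := hmono (Set.mem_Icc.2 ⟨le_of_lt hp₀, le_of_lt (lt_of_lt_of_le hp₀₁ h)⟩)
      (Set.mem_Icc.2 ⟨le_of_lt (lt_trans hp₀ hp₀₁), h⟩) hp₀₁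
    have h2 : p₀ ^ (a - 1) * (1 - p₀) < p₁ ^ (a - 1) * (1 - p₁) := h1
    rw [hroot₀, hroot₁] at h2
    exact lt_irrefl _ h2
  -- derivative at a root p
  have key : ∀ p : ℝ, 0 < p → p ^ (a - 1) * (1 - p) = μ / m →
      deriv (fun p : ℝ => 2 * m * p ^ a * (1 - p) - 2 * μ * p) p
        = 2 * m * p ^ (a - 1) * ((a - 1) - a * p) := by
    intro p hp hroot
    rw [(hF p).deriv]
    have hμeq : μ = m * (p ^ (a - 1) * (1 - p)) := by
      rw [hroot]; field_simp
    have hpa : p ^ a = p ^ (a - 1) * p := by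
      rw [← Real.rpow_add_one (ne_of_gt hp) (a - 1)]
      norm_num
    rw [hμeq, hpa]
    ring
  refine ⟨?_, ?_, ?_⟩
  · rw [(hF 0).deriv, Real.zero_rpow (ne_of_gt ha1), Real.zero_rpow (ne_of_gt ha0)]
    linarith
  · rw [key p₀ hp₀ hroot₀]
    have hax : a * p₀ < a - 1 := by
      have := (mul_lt_mul_iff_right₀ ha0).2 h0c
      rwa [hapc] at this
    have hq := Real.rpow_pos_of_pos hp₀ (a - 1)
    have h5 : 0 < (a - 1) - a * p₀ := by linarith
    exact mul_pos (mul_pos (by linarith) hq) h5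
  · rw [key p₁ (lt_trans hp₀ hp₀₁) hroot₁]
    have hax : a - 1 < a * p₁ := by
      have := (mul_lt_mul_iff_right₀ ha0).2 hc1'
      rwa [hapc] at this
    have hq := Real.rpow_pos_of_pos (lt_trans hp₀ hp₀₁) (a - 1)
    exact mul_neg_of_pos_of_neg (mul_pos (by linarith) hq) (by linarith)
end

section
/- A uniform vector P^eq with P^eq_{ij} = p for all i ≠ j is an equilibrium of the ODE system dP_{ij}/dt = Σ_k (M_{ki} h(P_{ki}) P_{kj} + M_{kj} h(P_{kj}) P_{ki}) − P_{ij}(Σ_k (M_{ki} h(P_{ki}) + M_{kj} h(P_{kj})) + 2μ) with uniform migration M_{ij} = m for i ≠ j (M_{ii} = 0, P_{ii} = 1) if and only if h(p)·(1−p) = (μ/m)·p. -/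
open Finset

/-- A uniform vector `P_{ij} = p` (for `i ≠ j`, with `P_{ii} = 1`) is an equilibrium
of the ODE system
`dP_{ij}/dt = Σ_k (M_{ki} h(P_{ki}) P_{kj} + M_{kj} h(P_{kj}) P_{ki})
  − P_{ij}(Σ_k (M_{ki} h(P_{ki}) + M_{kj} h(P_{kj})) + 2μ)`
with uniform migration `M_{ij} = m` for `i ≠ j` (and `M_{ii} = 0`) if and only if
`h(p)·(1−p) = (μ/m)·p`. -/
theorem uniform_equilibrium_iff (N : ℕ) (hN : 2 ≤ N) (m μ p : ℝ)
    (hm : 0 < m) (hμ : 0 < μ) (h : ℝ → ℝ)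
    (M P : Fin N → Fin N → ℝ)
    (hM : ∀ i j : Fin N, M i j = if i = j then 0 else m)
    (hP : ∀ i j : Fin N, P i j = if i = j then 1 else p) :
    (∀ i j : Fin N, i ≠ j →
      (∑ k, (M k i * h (P k i) * P k j + M k j * h (P k j) * P k i))
        - P i j * ((∑ k, (M k i * h (P k i) + M k j * h (P k j))) + 2 * μ) = 0)
    ↔ h p * (1 - p) = (μ / m) * p := by
  have key : ∀ i j : Fin N, i ≠ j →
      (∑ k, (M k i * h (P k i) * P k j + M k j * h (P k j) * P k i))
        - P i j * ((∑ k, (M k i * h (P k i) + M k j * h (P k j))) + 2 * μ)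
      = 2 * m * h p * (1 - p) - 2 * μ * p := by
    intro i j hij
    have h1 : ∀ k : Fin N, M k i * h (P k i) * P k j + M k j * h (P k j) * P k i
        = 2 * m * h p * p + (if k = i then m * h p - 2 * m * h p * p else 0)
          + (if k = j then m * h p - 2 * m * h p * p else 0) := by
      intro k
      by_cases hki : k = i
      · subst hki
        simp [hM, hP, hij, Ne.symm hij]
      · by_cases hkj : k = j
        · subst hkj
          simp [hM, hP, hij, Ne.symm hij, hki]
        · simp [hM, hP, hki, hkj]
          ring
    have h2 : ∀ k : Fin N, M k i * h (P k i) + M k j * h (P k j)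
        = 2 * m * h p + (if k = i then -(m * h p) else 0)
          + (if k = j then -(m * h p) else 0) := by
      intro k
      by_cases hki : k = i
      · subst hki
        simp [hM, hP, hij, Ne.symm hij]
        ring
      · by_cases hkj : k = j
        · subst hkj
          simp [hM, hP, hij, Ne.symm hij, hki]
          ring
        · simp [hM, hP, hki, hkj]
          ring
    rw [Finset.sum_congr rfl (fun k _ => h1 k), Finset.sum_congr rfl (fun k _ => h2 k)]
    simp only [Finset.sum_add_distrib, Finset.sum_const, Finset.card_univ,
      Fintype.card_fin, nsmul_eq_mul, Finset.sum_ite_eq', Finset.mem_univ, if_true]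
    rw [hP i j, if_neg hij]
    have hN' : (1 : ℝ) ≤ (N : ℝ) := by exact_mod_cast Nat.one_le_of_lt hN
    ring
  constructor
  · intro H
    have i0 : Fin N := ⟨0, by omega⟩
    have i1 : Fin N := ⟨1, by omega⟩
    have hne : (⟨0, by omega⟩ : Fin N) ≠ ⟨1, by omega⟩ := by
      intro hc
      simpa using congrArg Fin.val hc
    have := H _ _ hne
    rw [key _ _ hne] at this
    have hm' : m ≠ 0 := ne_of_gt hm
    field_simp
    nlinarith [this]
  · intro H i j hij
    rw [key i j hij]
    have hm' : m ≠ 0 := ne_of_gt hm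
    field_simp at H
    nlinarith [H]
end

section
/- At a uniform equilibrium p^eq (satisfying h(p^eq)(1−p^eq) = (μ/m)·p^eq) of the complete uniform migration system, the Jacobian can be written as J = 2m·φ'(p^eq)·I + A, where φ(p) = h(p)(1−p) − (μ/m)p and A is the transition rate matrix of the Markov chain on unordered pairs {i,j} that jumps from {i,j} to {i,k} and to {k,j} at rate m·h(p^eq) for each k ∉ {i,j}. -/
open scoped Classical

/-- At a uniform equilibrium `p^eq` of the complete uniform migration system, the
Jacobian (indexed by unordered pairs of distinct populations, with diagonal entries
`2m·h'(p)(1−p) − 2(N−1)m·h(p) − 2μ`, entries `m·h(p)` between pairs sharing exactly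
one index, and `0` otherwise) decomposes as `J = 2m·φ'(p^eq)·I + A`, where
`φ(p) = h(p)(1−p) − (μ/m)p` and `A` is the transition rate matrix of the Markov
chain on unordered pairs jumping from `{i,j}` to `{i,k}` and `{k,j}` at rate
`m·h(p^eq)` for each `k ∉ {i,j}` (off-diagonal entries `m·h(p^eq)` between pairs
sharing an index, zero otherwise, rows summing to zero and off-diagonal entries
nonnegative). -/
theorem jacobian_decomposition (N : ℕ) (hN : 3 ≤ N) (m μ p : ℝ)
    (hm : 0 < m) (hμ : 0 < μ) (h : ℝ → ℝ) (hdiff : Differentiable ℝ h)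
    (hhp : 0 ≤ h p)
    (heq : h p * (1 - p) = (μ / m) * p)
    (J A : Matrix {s : Sym2 (Fin N) // ¬ s.IsDiag} {s : Sym2 (Fin N) // ¬ s.IsDiag} ℝ)
    (hJ : ∀ s t, J s t =
      if s = t then 2 * m * deriv h p * (1 - p) - 2 * (N - 1) * m * h p - 2 * μ
      else if ∃ x : Fin N, x ∈ s.1 ∧ x ∈ t.1 then m * h p else 0)
    (hA : ∀ s t, A s t =
      if s = t then -(2 * (N - 2) * m * h p)
      else if ∃ x : Fin N, x ∈ s.1 ∧ x ∈ t.1 then m * h p else 0) :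
    J = (2 * m * (deriv h p * (1 - p) - h p - μ / m)) • (1 : Matrix _ _ ℝ) + A
    ∧ (∀ s, ∑ t, A s t = 0)
    ∧ (∀ s t, s ≠ t → 0 ≤ A s t) := by
  refine ⟨?_, ?_, ?_⟩
  · ext s t
    simp only [Matrix.add_apply, Matrix.smul_apply, Matrix.one_apply, hJ, hA]
    by_cases hst : s = t
    · simp only [hst, if_pos rfl, if_true, smul_eq_mul, mul_one]
      field_simp
      ring
    · simp [hst]
  · intro s
    obtain ⟨⟨i, j⟩, hrep⟩ := Quot.exists_rep s.1
    have hs1 : s.1 = s(i, j) := hrep.symm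
    have hij : i ≠ j := by
      have := s.2
      rw [hs1] at this
      simpa using this
    have hsum : ∑ t, A s t = A s s + ∑ t ∈ Finset.univ.erase s, A s t :=
      (Finset.add_sum_erase _ _ (Finset.mem_univ s)).symm
    have hAss : A s s = -(2 * ((N : ℝ) - 2) * m * h p) := by rw [hA]; simp
    have herase : ∑ t ∈ Finset.univ.erase s, A s t
        = ∑ t ∈ (Finset.univ.erase s).filter
            (fun t => ∃ x : Fin N, x ∈ s.1 ∧ x ∈ t.1), m * h p := by
      rw [Finset.sum_filter]
      refine Finset.sum_congr rfl fun t ht => ?_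
      rw [hA, if_neg fun hsq => (Finset.mem_erase.mp ht).1 hsq.symm]
    have hcard : (({i, j} : Finset (Fin N)) ×ˢ (Finset.univ \ {i, j})).card
        = ((Finset.univ.erase s).filter
            (fun t => ∃ x : Fin N, x ∈ s.1 ∧ x ∈ t.1)).card := by
      refine Finset.card_bij (fun ak hak => (⟨s(ak.1, ak.2), ?_⟩ :
          {s : Sym2 (Fin N) // ¬ s.IsDiag})) ?_ ?_ ?_
      · obtain ⟨ha, hk⟩ := Finset.mem_product.mp hak
        simp only [Finset.mem_sdiff, Finset.mem_insert, Finset.mem_singleton] at ha hk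
        rw [Sym2.mk_isDiag_iff]
        intro hd
        exact hk.2 (hd ▸ ha)
      · rintro ⟨a, k⟩ hak
        obtain ⟨ha, hk⟩ := Finset.mem_product.mp hak
        simp only [Finset.mem_insert, Finset.mem_singleton] at ha
        simp only [Finset.mem_sdiff, Finset.mem_insert, Finset.mem_singleton,
          not_or, Finset.mem_univ, true_and] at hk
        refine Finset.mem_filter.mpr ⟨Finset.mem_erase.mpr ⟨?_, Finset.mem_univ _⟩, ?_⟩
        · intro hts
          have : s(a, k) = s(i, j) := by
            have := congrArg Subtype.val hts
            simpa [hs1] using this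
          rw [Sym2.eq_iff] at this
          rcases this with ⟨rfl, rfl⟩ | ⟨rfl, rfl⟩
          · exact hk.2 rfl
          · exact hk.1 rfl
        · exact ⟨a, by rw [hs1]; rcases ha with rfl | rfl <;> simp, by simp⟩
      · rintro ⟨a, k⟩ hak ⟨a', k'⟩ hak' hEq
        obtain ⟨ha, hk⟩ := Finset.mem_product.mp hak
        obtain ⟨ha', hk'⟩ := Finset.mem_product.mp hak'
        simp only [Finset.mem_insert, Finset.mem_singleton] at ha ha'
        simp only [Finset.mem_sdiff, Finset.mem_insert, Finset.mem_singleton,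
          not_or, Finset.mem_univ, true_and] at hk hk'
        have : s(a, k) = s(a', k') := congrArg Subtype.val hEq
        rw [Sym2.eq_iff] at this
        rcases this with ⟨rfl, rfl⟩ | ⟨rfl, rfl⟩
        · rfl
        · exfalso; rcases ha with rfl | rfl
          · exact hk'.1 rfl
          · exact hk'.2 rfl
      · rintro t ht
        obtain ⟨hterase, x, hxs, hxt⟩ := Finset.mem_filter.mp ht
        have hts : t ≠ s := (Finset.mem_erase.mp hterase).1
        obtain ⟨⟨u, v⟩, hrt⟩ := Quot.exists_rep t.1
        have ht1 : t.1 = s(u, v) := hrt.symm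
        have hxuv : x = u ∨ x = v := by rw [ht1] at hxt; simpa using hxt
        have : ∃ y, t.1 = s(x, y) := by
          rcases hxuv with rfl | rfl
          · exact ⟨v, ht1⟩
          · exact ⟨u, by rw [ht1, Sym2.eq_swap]⟩
        obtain ⟨y, hty⟩ := this
        have hxy : x ≠ y := by
          have := t.2; rw [hty] at this; simpa using this
        have hxij : x = i ∨ x = j := by rw [hs1] at hxs; simpa using hxs
        have hyij : y ≠ i ∧ y ≠ j := by
          constructor <;> rintro rfl
          · apply hts; apply Subtype.ext
            rw [hty, hs1]
            rcases hxij with rfl | rfl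
            · exact absurd rfl hxy
            · rw [Sym2.eq_swap]
          · apply hts; apply Subtype.ext
            rw [hty, hs1]
            rcases hxij with rfl | rfl
            · rfl
            · exact absurd rfl hxy
        refine ⟨(x, y), Finset.mem_product.mpr ⟨?_, ?_⟩, ?_⟩
        · simpa using hxij
        · simp [hyij.1, hyij.2]
        · exact Subtype.ext hty.symm
    have hcardval : (({i, j} : Finset (Fin N)) ×ˢ (Finset.univ \ {i, j})).card
        = 2 * (N - 2) := by
      rw [Finset.card_product, Finset.card_sdiff_of_subset (by simp), Finset.card_insert_of_notMem
        (by simpa using hij), Finset.card_singleton]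
      simp [Finset.card_insert_of_notMem, hij]
    rw [hsum, hAss, herase, Finset.sum_const, ← hcard, hcardval]
    have h2N : (2 : ℕ) ≤ N := by omega
    rw [nsmul_eq_mul, Nat.cast_mul, Nat.cast_sub h2N]
    push_cast
    ring
  · intro s t hst
    rw [hA, if_neg hst]
    split
    · exact mul_nonneg hm.le hhp
    · exact le_refl _
end

section
/- A uniform equilibrium p^eq > 0 of the complete uniform migration system is linearly stable (all Jacobian eigenvalues have negative real part) if h'(p^eq)(1−p^eq) − h(p^eq) < μ/m, and this condition is independent of N. -/
open scoped Classical

lemma sym2_exists_rep {α : Type*} (z : Sym2 α) : ∃ a b, z = s(a, b) := by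
  induction z using Sym2.ind with
  | _ x y => exact ⟨x, y, rfl⟩

/-- A uniform equilibrium `p^eq > 0` of the complete uniform migration system
(`M_{ij} = m` for `i ≠ j`) is linearly stable — every eigenvalue of the Jacobian
(indexed by unordered pairs of distinct populations) has negative real part —
provided `h'(p^eq)(1−p^eq) − h(p^eq) < μ/m`; the condition is independent of `N`
(the conclusion holds for every `N ≥ 3`). -/
theorem uniform_equilibrium_linearly_stable (N : ℕ) (hN : 3 ≤ N) (m μ p : ℝ)
    (hm : 0 < m) (hμ : 0 < μ) (hp : 0 < p) (h : ℝ → ℝ)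
    (hdiff : Differentiable ℝ h) (hhp : 0 ≤ h p)
    (heq : h p * (1 - p) = (μ / m) * p)
    (hstab : deriv h p * (1 - p) - h p < μ / m)
    (J : Matrix {s : Sym2 (Fin N) // ¬ s.IsDiag} {s : Sym2 (Fin N) // ¬ s.IsDiag} ℝ)
    (hJ : ∀ s t, J s t =
      if s = t then 2 * m * deriv h p * (1 - p) - 2 * (N - 1) * m * h p - 2 * μ
      else if ∃ x : Fin N, x ∈ s.1 ∧ x ∈ t.1 then m * h p else 0) :
    ∀ lam : ℂ, lam ∈ spectrum ℂ (J.map (fun a => (a : ℂ))) → lam.re < 0 := by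
  classical
  intro lam hlam
  have hc0 : 0 ≤ m * h p := mul_nonneg hm.le hhp
  -- spectrum → eigenvalue
  rw [← AlgEquiv.spectrum_eq
        (Matrix.toLinAlgEquiv' (n := {s : Sym2 (Fin N) // ¬ s.IsDiag}) (R := ℂ)),
      ← Module.End.hasEigenvalue_iff_mem_spectrum] at hlam
  obtain ⟨k, hk⟩ := eigenvalue_mem_ball hlam
  obtain ⟨a, b, hab2⟩ := sym2_exists_rep k.1
  have hab : a ≠ b := by
    have := k.2
    rw [hab2, Sym2.mk_isDiag_iff] at this
    exact this
  have hdiag : (J.map (fun a => (a : ℂ))) k k =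
      ((2 * m * deriv h p * (1 - p) - 2 * (N - 1) * m * h p - 2 * μ : ℝ) : ℂ) := by
    simp only [Matrix.map_apply, hJ k k, if_pos rfl, eq_self_iff_true, if_true]
  -- the set of neighbors
  set S : Finset {s : Sym2 (Fin N) // ¬ s.IsDiag} := (Finset.univ.erase k).filter
      (fun t => ∃ x : Fin N, x ∈ k.1 ∧ x ∈ t.1) with hS
  have hsum : ∑ t ∈ Finset.univ.erase k, ‖(J.map (fun a => (a : ℂ))) k t‖
      = S.card * (m * h p) := by
    rw [← Finset.sum_filter_add_sum_filter_not _ (fun t => ∃ x : Fin N, x ∈ k.1 ∧ x ∈ t.1)]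
    rw [← hS]
    have h1 : ∀ t ∈ S, ‖(J.map (fun a => (a : ℂ))) k t‖ = m * h p := by
      intro t ht
      rw [hS, Finset.mem_filter, Finset.mem_erase] at ht
      have hne : ¬ (k = t) := fun e => ht.1.1 e.symm
      simp only [Matrix.map_apply, hJ k t, if_neg hne, if_pos ht.2]
      rw [Complex.norm_real, Real.norm_eq_abs, abs_of_nonneg hc0]
    have h2 : ∀ t ∈ (Finset.univ.erase k).filter
        (fun t => ¬ ∃ x : Fin N, x ∈ k.1 ∧ x ∈ t.1),
        ‖(J.map (fun a => (a : ℂ))) k t‖ = 0 := by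
      intro t ht
      rw [Finset.mem_filter, Finset.mem_erase] at ht
      have hne : ¬ (k = t) := fun e => ht.1.1 e.symm
      simp only [Matrix.map_apply, hJ k t, if_neg hne, if_neg ht.2]
      simp
    rw [Finset.sum_congr rfl h1, Finset.sum_congr rfl h2]
    simp [mul_comm]
  -- counting: S.card ≤ 2 * (N - 2)
  have hcount : (S.card : ℝ) ≤ 2 * ((N : ℝ) - 2) := by
    have hTa : ∀ v : Fin N, v ∈ ({a, b} : Finset (Fin N)) →
        (((Finset.univ.erase k).filter
          (fun t : {s : Sym2 (Fin N) // ¬ s.IsDiag} => v ∈ t.1)).card ≤ N - 2) := by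
      intro v hv
      have hcard : (((Finset.univ.erase k).filter
          (fun t : {s : Sym2 (Fin N) // ¬ s.IsDiag} => v ∈ t.1)).card
          ≤ (Finset.univ \ ({a, b} : Finset (Fin N))).card) := by
        apply Finset.card_le_card_of_injOn
          (fun t => if h : v ∈ t.1 then Sym2.Mem.other' h else v)
        · intro t ht
          rw [Finset.mem_coe, Finset.mem_filter, Finset.mem_erase] at ht
          obtain ⟨⟨htk, -⟩, hvt⟩ := ht
          beta_reduce
          rw [Finset.mem_coe, dif_pos hvt]
          have hne_v : Sym2.Mem.other' hvt ≠ v := by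
            rw [← Sym2.other_eq_other']
            exact Sym2.other_ne t.2 hvt
          have hspec : s(v, Sym2.Mem.other' hvt) = t.1 := Sym2.other_spec' hvt
          have hother_ne : ∀ w ∈ ({a, b} : Finset (Fin N)), Sym2.Mem.other' hvt ≠ w := by
            intro w hw hwe
            rcases Finset.mem_insert.mp hv with rfl | hv'
            · rcases Finset.mem_insert.mp hw with rfl | hw'
              · exact hne_v hwe
              · have : w = b := by simpa using hw'
                subst this
                apply htk
                apply Subtype.ext
                rw [← hspec, hwe, ← hab2]
            · have hvb : v = b := by simpa using hv'
              subst hvb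
              rcases Finset.mem_insert.mp hw with rfl | hw'
              · apply htk
                apply Subtype.ext
                rw [← hspec, hwe, Sym2.eq_swap, ← hab2]
              · have : w = v := by simpa using hw'
                subst this
                exact hne_v hwe
          simp only [Finset.mem_sdiff, Finset.mem_univ, true_and]
          intro hmem
          exact hother_ne _ hmem rfl
        · intro t ht t' ht' hee
          simp only [Finset.mem_coe, Finset.mem_filter, Finset.mem_erase] at ht ht'
          simp only at hee
          rw [dif_pos ht.2, dif_pos ht'.2] at hee
          apply Subtype.ext
          rw [← Sym2.other_spec' ht.2, ← Sym2.other_spec' ht'.2, hee]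
      rwa [Finset.card_sdiff_of_subset (Finset.subset_univ _), Finset.card_univ, Fintype.card_fin,
        Finset.card_insert_of_notMem (by simpa using hab), Finset.card_singleton] at hcard
    have hsub : S ⊆ ((Finset.univ.erase k).filter
          (fun t : {s : Sym2 (Fin N) // ¬ s.IsDiag} => a ∈ t.1)) ∪
        ((Finset.univ.erase k).filter
          (fun t : {s : Sym2 (Fin N) // ¬ s.IsDiag} => b ∈ t.1)) := by
      intro t ht
      rw [hS, Finset.mem_filter] at ht
      obtain ⟨hte, x, hxk, hxt⟩ := ht
      rw [Finset.mem_union, Finset.mem_filter, Finset.mem_filter]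
      have : x = a ∨ x = b := by
        rw [hab2] at hxk
        simpa [Sym2.mem_iff] using hxk
      rcases this with rfl | rfl
      · exact Or.inl ⟨hte, hxt⟩
      · exact Or.inr ⟨hte, hxt⟩
    have hN' : S.card ≤ (N - 2) + (N - 2) :=
      (Finset.card_le_card hsub).trans
        ((Finset.card_union_le _ _).trans
          (add_le_add (hTa a (by simp)) (hTa b (by simp))))
    calc (S.card : ℝ) ≤ ((N - 2 : ℕ) : ℝ) + ((N - 2 : ℕ) : ℝ) := by exact_mod_cast hN'
      _ = 2 * ((N : ℝ) - 2) := by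
          have h2 : 2 ≤ N := by omega
          have : ((N - 2 : ℕ) : ℝ) = (N : ℝ) - 2 := by
            push_cast [h2]
            ring
          rw [this]; ring
  -- Gershgorin bound on the real part
  rw [mem_closedBall_iff_norm, hdiag] at hk
  have hre : |lam.re - (2 * m * deriv h p * (1 - p) - 2 * (N - 1) * m * h p - 2 * μ)|
      ≤ ‖lam - ((2 * m * deriv h p * (1 - p) - 2 * (N - 1) * m * h p - 2 * μ : ℝ) : ℂ)‖ := by
    have := Complex.abs_re_le_norm
      (lam - ((2 * m * deriv h p * (1 - p) - 2 * (N - 1) * m * h p - 2 * μ : ℝ) : ℂ))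
    simpa using this
  have hkey : lam.re ≤ (2 * m * deriv h p * (1 - p) - 2 * (N - 1) * m * h p - 2 * μ)
      + (S.card : ℝ) * (m * h p) := by
    have h1 : lam.re - (2 * m * deriv h p * (1 - p) - 2 * (N - 1) * m * h p - 2 * μ)
        ≤ (S.card : ℝ) * (m * h p) :=
      le_trans (le_abs_self _) (hre.trans (hsum ▸ hk))
    linarith
  -- final arithmetic
  have hb : (S.card : ℝ) * (m * h p) ≤ 2 * ((N : ℝ) - 2) * (m * h p) :=
    mul_le_mul_of_nonneg_right hcount hc0
  have hmm : m * (μ / m) = μ := mul_div_cancel₀ μ (ne_of_gt hm)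
  have hst : 2 * m * (deriv h p * (1 - p) - h p) < 2 * μ := by
    have h2m : (0 : ℝ) < 2 * m := by linarith
    calc 2 * m * (deriv h p * (1 - p) - h p) < 2 * m * (μ / m) :=
          mul_lt_mul_of_pos_left hstab h2m
      _ = 2 * μ := by rw [mul_assoc, hmm]
  nlinarith
end

section
/- In the two-block equilibrium equations, if h(p_inter) is bounded away from 0 and p₁, p₂, p_inter ∈ [0,1] are equilibrium values for block sizes |V₁|, |V₂| → ∞, then h(p_inter)·(p_inter − p₁) → 0 and h(p_inter)·(p_inter − p₂) → 0; consequently any limit point satisfies either h(p_inter) = 0 (reproductive isolation) or p_inter = p₁ = p₂ (uniformity). -/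
open Filter Topology

lemma aux_tendsto_zero (X : ℕ → ℝ) (M : ℝ)
    (hX : ∀ n : ℕ, 1 ≤ n → |X n| ≤ M / n) :
    Tendsto X atTop (𝓝 0) := by
  refine squeeze_zero_norm' ?_ (tendsto_const_div_atTop_nhds_zero_nat M)
  filter_upwards [eventually_ge_atTop 1] with n hn
  simpa using hX n hn

/-- In the two-block equilibrium equations with block sizes tending to infinity,
if `h(p_inter)` is bounded away from `0` then `h(p_inter)·(p_inter − p₁) → 0` and
`h(p_inter)·(p_inter − p₂) → 0`; consequently, any limit point `(q₁, q₂, q_inter)`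
satisfies either `h(q_inter) = 0` (reproductive isolation) or
`q_inter = q₁ = q₂` (uniformity). -/
theorem two_block_large_N_homogenization (m μ : ℝ) (hm : 0 < m) (hμ : 0 < μ)
    (h : ℝ → ℝ) (hcont : Continuous h)
    (hrange : ∀ x ∈ Set.Icc (0:ℝ) 1, h x ∈ Set.Icc (0:ℝ) 1)
    (p₁ p₂ pInter : ℕ → ℝ)
    (hmem : ∀ n, p₁ n ∈ Set.Icc (0:ℝ) 1 ∧ p₂ n ∈ Set.Icc (0:ℝ) 1
      ∧ pInter n ∈ Set.Icc (0:ℝ) 1)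
    (heq1 : ∀ n : ℕ, (n : ℝ) * h (pInter n) * (pInter n - p₁ n)
      + h (p₁ n) * (1 - p₁ n) - (μ / m) * p₁ n = 0)
    (heq2 : ∀ n : ℕ, (n : ℝ) * h (pInter n) * (pInter n - p₂ n)
      + h (p₂ n) * (1 - p₂ n) - (μ / m) * p₂ n = 0)
    (hb : ∃ b > 0, ∀ n, b ≤ h (pInter n)) :
    Tendsto (fun n => h (pInter n) * (pInter n - p₁ n)) atTop (𝓝 0)
    ∧ Tendsto (fun n => h (pInter n) * (pInter n - p₂ n)) atTop (𝓝 0)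
    ∧ ∀ (φ : ℕ → ℕ) (q₁ q₂ qInter : ℝ), StrictMono φ →
        Tendsto (p₁ ∘ φ) atTop (𝓝 q₁) → Tendsto (p₂ ∘ φ) atTop (𝓝 q₂) →
        Tendsto (pInter ∘ φ) atTop (𝓝 qInter) →
        h qInter = 0 ∨ (qInter = q₁ ∧ qInter = q₂) := by
  have hμm : 0 ≤ μ / m := le_of_lt (div_pos hμ hm)
  have key : ∀ (p : ℕ → ℝ), (∀ n, p n ∈ Set.Icc (0:ℝ) 1) →
      (∀ n : ℕ, (n : ℝ) * h (pInter n) * (pInter n - p n)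
        + h (p n) * (1 - p n) - (μ / m) * p n = 0) →
      Tendsto (fun n => h (pInter n) * (pInter n - p n)) atTop (𝓝 0) := by
    intro p hp heq
    apply aux_tendsto_zero _ (1 + μ / m)
    intro n hn
    have hn' : (0:ℝ) < (n : ℝ) := by exact_mod_cast hn
    have hbnd : |h (p n) * (1 - p n) - (μ / m) * p n| ≤ 1 + μ / m := by
      obtain ⟨hp0, hp1⟩ := hp n
      obtain ⟨hh0, hh1⟩ := hrange (p n) (hp n)
      have h1 : |h (p n) * (1 - p n)| ≤ 1 := by
        rw [abs_mul]
        have : |h (p n)| ≤ 1 := abs_le.2 ⟨by linarith, hh1⟩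
        have : |1 - p n| ≤ 1 := abs_le.2 ⟨by linarith, by linarith⟩
        nlinarith [abs_nonneg (h (p n)), abs_nonneg (1 - p n),
          abs_le.2 (⟨by linarith, hh1⟩ : -1 ≤ h (p n) ∧ h (p n) ≤ 1)]
      have h2 : |(μ / m) * p n| ≤ μ / m := by
        rw [abs_mul, abs_of_nonneg hμm]
        have : |p n| ≤ 1 := abs_le.2 ⟨by linarith, hp1⟩
        nlinarith
      calc |h (p n) * (1 - p n) - (μ / m) * p n|
          ≤ |h (p n) * (1 - p n)| + |(μ / m) * p n| := abs_sub _ _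
        _ ≤ 1 + μ / m := by linarith
    have heqn := heq n
    have hEq : h (pInter n) * (pInter n - p n)
        = ((μ / m) * p n - h (p n) * (1 - p n)) / n := by
      rw [eq_div_iff hn'.ne']
      linear_combination heqn
    rw [hEq, abs_div, abs_of_pos hn']
    gcongr
    calc |(μ / m) * p n - h (p n) * (1 - p n)|
        = |h (p n) * (1 - p n) - (μ / m) * p n| := abs_sub_comm _ _
      _ ≤ 1 + μ / m := hbnd
  have h1 := key p₁ (fun n => (hmem n).1) heq1
  have h2 := key p₂ (fun n => (hmem n).2.1) heq2
  refine ⟨h1, h2, ?_⟩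
  intro φ q₁ q₂ qInter hφ hq1 hq2 hqI
  have hφtop : Tendsto φ atTop atTop := hφ.tendsto_atTop
  have lim1 : Tendsto (fun n => h (pInter (φ n)) * (pInter (φ n) - p₁ (φ n)))
      atTop (𝓝 (h qInter * (qInter - q₁))) :=
    ((hcont.tendsto qInter).comp hqI).mul (hqI.sub hq1)
  have lim2 : Tendsto (fun n => h (pInter (φ n)) * (pInter (φ n) - p₂ (φ n)))
      atTop (𝓝 (h qInter * (qInter - q₂))) :=
    ((hcont.tendsto qInter).comp hqI).mul (hqI.sub hq2)
  have z1 : h qInter * (qInter - q₁) = 0 :=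
    tendsto_nhds_unique lim1 (h1.comp hφtop)
  have z2 : h qInter * (qInter - q₂) = 0 :=
    tendsto_nhds_unique lim2 (h2.comp hφtop)
  rcases mul_eq_zero.1 z1 with hz | hz
  · exact Or.inl hz
  · rcases mul_eq_zero.1 z2 with hz' | hz'
    · exact Or.inl hz'
    · exact Or.inr ⟨by linarith [sub_eq_zero.1 hz], by linarith [sub_eq_zero.1 hz']⟩
end

section
/- The zero configuration P_{ij} = 0 for all i ≠ j is an equilibrium of the master equation, and if h(0) = 0 and h is differentiable at 0 with h'(0) = 0, the Jacobian of the system at this equilibrium is −2μ·I, hence the zero equilibrium is linearly stable with all eigenvalues equal to −2μ. -/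
open Finset

/-- The symmetric configuration with entries of the unordered pair `{a,b}` set to
`x`, all other off-diagonal entries `0`, and diagonal entries `1`. -/
def zeroPerturbed {N : ℕ} (a b : Fin N) (x : ℝ) : Fin N → Fin N → ℝ :=
  fun i j => if i = j then 1 else if (i = a ∧ j = b) ∨ (i = b ∧ j = a) then x else 0

/-- The master-equation vector field coordinate
`F_{ij}(P) = Σ_{k∉{i,j}} (M_{ki}h(P_{ki})(P_{kj} − P_{ij}) + M_{kj}h(P_{kj})(P_{ki} − P_{ij}))
  + (M_{ij}+M_{ji})·h(P_{ij})(1 − P_{ij}) − 2μ·P_{ij}`. -/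
def masterField {N : ℕ} (μ : ℝ) (M : Fin N → Fin N → ℝ) (h : ℝ → ℝ)
    (i j : Fin N) (P : Fin N → Fin N → ℝ) : ℝ :=
  (∑ k ∈ univ.filter (fun k => k ≠ i ∧ k ≠ j),
      (M k i * h (P k i) * (P k j - P i j) + M k j * h (P k j) * (P k i - P i j)))
    + (M i j + M j i) * h (P i j) * (1 - P i j) - 2 * μ * P i j

lemma zp_comm {N : ℕ} (a b : Fin N) : zeroPerturbed a b = zeroPerturbed b a := by
  funext x i j
  simp [zeroPerturbed, or_comm]

lemma on_case {N : ℕ} (μ : ℝ) (M : Fin N → Fin N → ℝ) (h : ℝ → ℝ) (h0 : h 0 = 0)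
    (i j : Fin N) (hij : i ≠ j) :
    (fun x => masterField μ M h i j (zeroPerturbed i j x))
      = fun x => (M i j + M j i) * h x * (1 - x) - 2 * μ * x := by
  funext x
  have hPij : zeroPerturbed i j x i j = x := by
    simp [zeroPerturbed, hij]
  unfold masterField
  rw [Finset.sum_eq_zero, hPij]
  · ring
  intro k hk
  simp only [mem_filter] at hk
  obtain ⟨-, hki, hkj⟩ := hk
  have h1 : zeroPerturbed i j x k i = 0 := by
    simp [zeroPerturbed, hki, hkj]
  have h2 : zeroPerturbed i j x k j = 0 := by
    simp [zeroPerturbed, hki, hkj]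
  rw [h1, h2, h0]
  ring

lemma off_case {N : ℕ} (μ : ℝ) (M : Fin N → Fin N → ℝ) (h : ℝ → ℝ) (h0 : h 0 = 0)
    (i j a b : Fin N) (hij : i ≠ j) (hab : a ≠ b)
    (hoff : ¬((a = i ∧ b = j) ∨ (a = j ∧ b = i))) :
    (fun x => masterField μ M h i j (zeroPerturbed a b x)) = fun _ => 0 := by
  funext x
  have hPij : zeroPerturbed a b x i j = 0 := by
    simp only [zeroPerturbed]
    rw [if_neg hij, if_neg]
    rintro (⟨hia, hjb⟩ | ⟨hib, hja⟩)
    · exact hoff (Or.inl ⟨hia.symm, hjb.symm⟩)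
    · exact hoff (Or.inr ⟨hja.symm, hib.symm⟩)
  unfold masterField
  rw [hPij, h0, Finset.sum_eq_zero]
  · ring
  intro k hk
  simp only [mem_filter] at hk
  obtain ⟨-, hki, hkj⟩ := hk
  rcases eq_or_ne (zeroPerturbed a b x k i) 0 with h1 | h1
  · rw [h1, h0]; ring
  · have hc : (k = a ∧ i = b) ∨ (k = b ∧ i = a) := by
      by_contra hc
      apply h1
      simp only [zeroPerturbed]
      rw [if_neg hki, if_neg hc]
    have h2 : zeroPerturbed a b x k j = 0 := by
      simp only [zeroPerturbed]
      rw [if_neg hkj, if_neg]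
      rintro (⟨hka, hjb⟩ | ⟨hkb, hja⟩)
      · rcases hc with ⟨_, hib⟩ | ⟨hkb, _⟩
        · exact hij (hib.trans hjb.symm)
        · exact hab (hka.symm.trans hkb)
      · rcases hc with ⟨hka, _⟩ | ⟨_, hia⟩
        · exact hab (hka.symm.trans hkb)
        · exact hij (hia.trans hja.symm)
    rw [h2, h0]; ring

/-- The zero configuration `P_{ij} = 0` (for `i ≠ j`) is an equilibrium of the master
equation, and if `h(0) = 0`, `h'(0) = 0`, the Jacobian there is `−2μ·I`: the partial
derivative of `F_{ij}` in the coordinate `{a,b}` equals `−2μ` when `{a,b} = {i,j}`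
and `0` otherwise. Hence the zero equilibrium is linearly stable, all eigenvalues
being `−2μ < 0`. -/
theorem zero_equilibrium_stable (N : ℕ) (hN : 2 ≤ N) (μ : ℝ) (hμ : 0 < μ)
    (M : Fin N → Fin N → ℝ) (hM : ∀ i j, 0 ≤ M i j) (hMdiag : ∀ i, M i i = 0)
    (h : ℝ → ℝ) (hdiff : DifferentiableAt ℝ h 0) (h0 : h 0 = 0)
    (h'0 : deriv h 0 = 0) :
    (∀ i j : Fin N, i ≠ j → masterField μ M h i j (fun i' j' => if i' = j' then 1 else 0) = 0)
    ∧ (∀ i j a b : Fin N, i ≠ j → a ≠ b →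
        deriv (fun x => masterField μ M h i j (zeroPerturbed a b x)) 0
          = if (a = i ∧ b = j) ∨ (a = j ∧ b = i) then -(2 * μ) else 0)
    ∧ -(2 * μ) < 0 := by
  refine ⟨?_, ?_, by linarith⟩
  · intro i j hij
    have hP0 : (fun i' j' : Fin N => if i' = j' then (1:ℝ) else 0) = zeroPerturbed i j 0 := by
      funext i' j'
      simp [zeroPerturbed]
    rw [hP0]
    have h1 := congrFun (on_case μ M h h0 i j hij) 0
    rw [h1, h0]
    ring
  · intro i j a b hij hab
    have key : deriv (fun x => (M i j + M j i) * h x * (1 - x) - 2 * μ * x) 0 = -(2 * μ) := by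
      have ha : HasDerivAt (fun x => (M i j + M j i) * h x)
          ((M i j + M j i) * deriv h 0) 0 := hdiff.hasDerivAt.const_mul _
      have hb : HasDerivAt (fun x : ℝ => 1 - x) (-1) 0 := by
        simpa using (hasDerivAt_id (0:ℝ)).const_sub 1
      have hc : HasDerivAt (fun x : ℝ => 2 * μ * x) (2 * μ) 0 := by
        simpa using (hasDerivAt_id (0:ℝ)).const_mul (2 * μ)
      have H : HasDerivAt (fun x => (M i j + M j i) * h x * (1 - x) - 2 * μ * x) _ 0 :=
        (ha.mul hb).sub hc
      rw [H.deriv]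
      simp [h0, h'0]
    by_cases hcase : (a = i ∧ b = j) ∨ (a = j ∧ b = i)
    · rw [if_pos hcase]
      rcases hcase with ⟨ha1, hb1⟩ | ⟨ha1, hb1⟩
      · subst ha1; subst hb1
        rw [on_case μ M h h0 _ _ hij, key]
      · subst ha1; subst hb1
        rw [zp_comm, on_case μ M h h0 _ _ hij, key]
    · rw [if_neg hcase, off_case μ M h h0 i j a b hij hab hcase]
      simp
end
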